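/- arXiv:1606.05077 — 2 statements merged into one kernel-verified Lean document; each statement's English description precedes it below -/
import Mathlib

section
/- For any almost-Riordan array (a,g,f), the triple (a*, 1/(g∘f̄), f̄) with a* = (1, −1/(g∘f̄), f̄)·a is a two-sided inverse of (a,g,f) for the almost-Riordan product. In particular (a,g,f)·a* = 1. -/
open PowerSeries Finset

/-- Shift: `shift h = (h - h₀)/x`, i.e. the series with coefficients `h₁, h₂, …`. -/
noncomputable def shift (h : PowerSeries ℤ) : PowerSeries ℤ :=
  PowerSeries.mk fun n => coeff (n + 1) h

/-- Composition `h ∘ f` of formal power series (intended for `f` with zero constant term,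
in which case `coeff n (f ^ k) = 0` for `k > n`). -/
noncomputable def comp (h f : PowerSeries ℤ) : PowerSeries ℤ :=
  PowerSeries.mk fun n => ∑ k ∈ Finset.range (n + 1), coeff k h * coeff n (f ^ k)

/-- Action of an almost-Riordan array `(a,g,f)` on a power series `b`:
`(a,g,f)·b = b₀ a + x g b̃(f)` where `b̃ = (b - b₀)/x`. -/
noncomputable def act (a g f b : PowerSeries ℤ) : PowerSeries ℤ :=
  C (coeff 0 b) * a + X * g * comp (shift b) f

/-- Product of almost-Riordan arrays: `(a,g,f)·(b,u,v) = ((a,g,f)·b, g·u(f), v(f))`. -/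
noncomputable def arMul (t s : PowerSeries ℤ × PowerSeries ℤ × PowerSeries ℤ) :
    PowerSeries ℤ × PowerSeries ℤ × PowerSeries ℤ :=
  (act t.1 t.2.1 t.2.2 s.1, t.2.1 * comp s.2.1 t.2.2, comp s.2.2 t.2.2)

/-- `(a,g,f)` is an almost-Riordan array: `a₀ = 1`, `g₀ = 1`, `f₀ = 0`, `f₁ = 1`. -/
def isAR (t : PowerSeries ℤ × PowerSeries ℤ × PowerSeries ℤ) : Prop :=
  coeff 0 t.1 = 1 ∧ coeff 0 t.2.1 = 1 ∧ coeff 0 t.2.2 = 0 ∧ coeff 1 t.2.2 = 1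

/-! Once `f` has no constant term, `comp h f` is Mathlib's substitution `h.subst f`, so
composition is multiplicative and associative. Substituting `f` into `(g ∘ f̄) · gi = 1` and
using `f̄ ∘ f = x` gives `g · (gi ∘ f) = 1`. Since `a* = 1 − x · gi · (ã ∘ f̄)`, the array
`(a, g, f)` sends it to `a − x · g · (gi ∘ f) · ã = a − x ã = 1`; the remaining identities are
the defining relations of `f̄` and `gi`. -/

theorem coeff_pow_eq_zero_of_lt {f : PowerSeries ℤ} (hf : coeff 0 f = 0) {n k : ℕ} (h : n < k) :
    coeff n (f ^ k) = 0 :=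
  coeff_of_lt_order n <| (Nat.cast_lt.mpr h).trans_le <|
    le_order_pow_of_constantCoeff_eq_zero k (by rwa [← coeff_zero_eq_constantCoeff_apply])

theorem hasSubst_of_coeff_zero {f : PowerSeries ℤ} (hf : coeff 0 f = 0) : HasSubst f :=
  HasSubst.of_constantCoeff_zero' (by rwa [← coeff_zero_eq_constantCoeff_apply])

theorem comp_eq_subst {f : PowerSeries ℤ} (hf : coeff 0 f = 0) (h : PowerSeries ℤ) :
    comp h f = h.subst f := by
  ext n
  rw [comp, coeff_mk, coeff_subst' (hasSubst_of_coeff_zero hf),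
    finsum_eq_sum_of_support_subset (s := range (n + 1))]
  · rfl
  · intro k hk
    simp only [Function.mem_support, coe_range, Set.mem_Iio] at hk ⊢
    by_contra! hnk
    exact hk (by rw [coeff_pow_eq_zero_of_lt hf (by omega), smul_zero])

theorem coeff_zero_act (a g f b : PowerSeries ℤ) :
    coeff 0 (act a g f b) = coeff 0 b * coeff 0 a := by
  simp [act, mul_assoc]

theorem shift_C_add_X_mul (c : ℤ) (h : PowerSeries ℤ) : shift (C c + X * h) = h := by
  ext n
  rw [shift, coeff_mk, map_add, coeff_C, if_neg n.succ_ne_zero, zero_add, coeff_succ_X_mul]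

theorem X_mul_shift_eq (h : PowerSeries ℤ) : X * shift h = h - C (coeff 0 h) := by
  rw [eq_sub_iff_add_eq, coeff_zero_eq_constantCoeff_apply]
  exact (eq_X_mul_shift_add_const h).symm

theorem shift_act_one (u v b : PowerSeries ℤ) : shift (act 1 u v b) = u * comp (shift b) v := by
  rw [act, mul_one, mul_assoc, shift_C_add_X_mul]

theorem act_act_one_neg_left {u v b : PowerSeries ℤ} (hb : coeff 0 b = 1) :
    act (act 1 (-u) v b) u v b = 1 := by
  simp only [act, hb, map_one]
  ring

theorem mul_subst_eq_one {R : Type*} [CommRing R] {g gi f fi : R⟦X⟧} (hf : HasSubst f)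
    (hfi : HasSubst fi) (hfif : fi.subst f = X) (hgi : g.subst fi * gi = 1) :
    g * gi.subst f = 1 := by
  have := congrArg (substAlgHom (R := R) hf) hgi
  rwa [map_mul, map_one, coe_substAlgHom, subst_comp_subst_apply hfi hf, hfif, X_subst] at this

theorem act_act_one_neg_right {a g f gi fi : PowerSeries ℤ} (ha : coeff 0 a = 1)
    (hf : coeff 0 f = 0) (hfi : coeff 0 fi = 0) (hfif : fi.subst f = X)
    (hggi : g * gi.subst f = 1) :
    act a g f (act 1 (-gi) fi a) = 1 := by
  have hsf := hasSubst_of_coeff_zero hf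
  have hshift : comp (shift (act 1 (-gi) fi a)) f = -(gi.subst f * shift a) := by
    rw [shift_act_one, comp_eq_subst hf, comp_eq_subst hfi, ← coe_substAlgHom hsf, map_mul,
      map_neg, coe_substAlgHom, subst_comp_subst_apply
      (hasSubst_of_coeff_zero hfi) hsf, hfif, X_subst, neg_mul]
  rw [act, coeff_zero_act, hshift, ha, coeff_zero_one, mul_one, map_one, one_mul]
  have hsa : X * shift a = a - 1 := by rw [X_mul_shift_eq, ha, map_one]
  linear_combination (-X * shift a) * hggi - hsa

theorem statement6_general (a g f fi gi astar : PowerSeries ℤ)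
    (ha : coeff 0 a = 1)
    (hf0 : coeff 0 f = 0)
    (hfi0 : coeff 0 fi = 0)
    (hffi : comp f fi = X) (hfif : comp fi f = X)
    (hgi : comp g fi * gi = 1)
    (hastar : astar = act 1 (-gi) fi a) :
    arMul (a, g, f) (astar, gi, fi) = (1, 1, X) ∧
    arMul (astar, gi, fi) (a, g, f) = (1, 1, X) ∧
    act a g f astar = 1 := by
  subst hastar
  rw [comp_eq_subst hf0] at hfif
  rw [comp_eq_subst hfi0] at hffi hgi
  have hggi : g * gi.subst f = 1 :=
    mul_subst_eq_one (hasSubst_of_coeff_zero hf0) (hasSubst_of_coeff_zero hfi0) hfif hgi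
  have hact : act a g f (act 1 (-gi) fi a) = 1 := act_act_one_neg_right ha hf0 hfi0 hfif hggi
  refine ⟨?_, ?_, hact⟩
  · simp only [arMul, comp_eq_subst hf0, hact, hggi, hfif]
  · simp only [arMul, comp_eq_subst hfi0, act_act_one_neg_left ha, mul_comm gi, hgi, hffi]

/-- `(a,g,f)⁻¹ = (a*, 1/(g∘f̄), f̄)` with `a* = (1, −1/(g∘f̄), f̄)·a`;
in particular `(a,g,f)·a* = 1`. -/
theorem statement6 (a g f fi gi astar : PowerSeries ℤ)
    (ha : coeff 0 a = 1) (hg : coeff 0 g = 1)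
    (hf0 : coeff 0 f = 0) (hf1 : coeff 1 f = 1)
    (hfi0 : coeff 0 fi = 0)
    (hffi : comp f fi = X) (hfif : comp fi f = X)
    (hgi : comp g fi * gi = 1)
    (hastar : astar = act 1 (-gi) fi a) :
    arMul (a, g, f) (astar, gi, fi) = (1, 1, X) ∧
    arMul (astar, gi, fi) (a, g, f) = (1, 1, X) ∧
    act a g f astar = 1 :=
  statement6_general a g f fi gi astar ha hf0 hfi0 hffi hfif hgi hastar
end

section
/- The subgroup of almost-Riordan arrays of the form (g, g f/x, f) (the embedded copy of the Riordan group) is not a normal subgroup of the group of almost-Riordan arrays. -/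
open PowerSeries Finset

/-!
Conjugate the Riordan array `(1 + x, 1 + x, x)` by `(1 + x, 1, x)`, whose inverse is
`(1 - x, 1, x)`. All third components are `x`, so composition never enters and the
conjugate is `(1 + x - x², 1 + x, x)`. A Riordan array `(U, U V/x, V)` with `V = x` has
equal first and second components, but `1 + x - x² ≠ 1 + x`.
-/

@[simp]
lemma comp_X (h : PowerSeries ℤ) : comp h X = h := by
  ext n
  simp only [comp, coeff_mk, coeff_X_pow]
  rw [Finset.sum_eq_single n (fun k _ hk => by simp [Ne.symm hk]) (by simp)]
  simp

@[simp]
lemma shift_add (h k : PowerSeries ℤ) : shift (h + k) = shift h + shift k := by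
  ext n
  simp [shift]

@[simp]
lemma shift_sub (h k : PowerSeries ℤ) : shift (h - k) = shift h - shift k := by
  ext n
  simp [shift]

@[simp]
lemma shift_one : shift 1 = 0 := by
  ext n
  simp [shift, coeff_one]

@[simp]
lemma shift_X : shift X = 1 := by
  ext n
  cases n <;> simp [shift, coeff_X, coeff_one]

lemma arMul_mk_X (a g b u v : PowerSeries ℤ) :
    arMul (a, g, X) (b, u, v) = (C (coeff 0 b) * a + X * g * shift b, g * u, v) := by
  simp [arMul, act]

lemma fst_eq_of_mk_X_eq {A B U V : PowerSeries ℤ}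
    (h : (A, B, X) = (U, U * shift V, V)) : A = B := by
  simp only [Prod.mk.injEq] at h
  obtain ⟨rfl, hB, rfl⟩ := h
  simpa using hB.symm

/-- the embedded copy `{(g, gf/x, f)}` of the Riordan group is not a
normal subgroup of the group of almost-Riordan arrays: some conjugate of an element
of that subgroup is not of the form `(U, UV/x, V)`. Here `fi = f̄`, `gi = 1/(g∘f̄)`,
so `(a,g,f)⁻¹ = ((1,−gi,fi)·a, gi, fi)`. -/
theorem statement17 :
    ∃ a g f u v fi gi : PowerSeries ℤ,
      isAR (a, g, f) ∧
      coeff 0 u = 1 ∧ coeff 0 v = 0 ∧ coeff 1 v = 1 ∧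
      coeff 0 fi = 0 ∧ comp f fi = X ∧ comp fi f = X ∧
      comp g fi * gi = 1 ∧
      ¬ ∃ U V : PowerSeries ℤ,
        arMul (arMul (a, g, f) (u, u * shift v, v)) (act 1 (-gi) fi a, gi, fi) =
          (U, U * shift V, V) := by
  refine ⟨1 + X, 1, X, 1 + X, X, X, 1, ⟨by simp, by simp, by simp, by simp⟩,
    by simp, by simp, by simp, by simp, comp_X X, comp_X X, by simp, ?_⟩
  have hinv : act 1 (-1) X (1 + X) = 1 - X := by
    simp only [act, comp_X, shift_add, shift_one, shift_X, coeff_zero_eq_constantCoeff, map_add,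
      constantCoeff_X, add_zero, map_one]
    ring
  have hconj : arMul (arMul (1 + X, 1, X) (1 + X, (1 + X) * shift X, X)) (1 - X, 1, X) =
      (1 + X - X ^ 2, 1 + X, X) := by
    simp only [arMul_mk_X, shift_X, mul_one, Prod.mk.injEq, and_true]
    refine ⟨?_, by ring⟩
    simp only [shift_add, shift_sub, shift_one, shift_X, coeff_zero_eq_constantCoeff, map_add,
      map_sub, constantCoeff_X, add_zero, sub_zero, map_one]
    ring
  rintro ⟨U, V, h⟩
  rw [hinv, hconj] at h
  have hcoeff := congrArg (coeff 2) (fst_eq_of_mk_X_eq h)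
  simp [coeff_X_pow] at hcoeff
end
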